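/- For the Kimura metric ds² = (r²/b) dt² - (1/(r²b²)) dr² - r² dθ² - r² sin²θ dφ² (with b a nonzero constant) on the region r > 0, 0 < θ < π, the vector field ξ = (r²/2) ∂_r is a proper conformal Killing vector with conformal factor φ(r) = r, i.e., £_ξ g = r · g. -/

import Mathlib

noncomputable section

/-- Points of the 4-dimensional coordinate domain. -/
abbrev Pt : Type := Fin 4 → ℝ

/-- A (real) vector field, given by its coordinate components. -/
abbrev Vec : Type := Pt → Fin 4 → ℝ

/-- Directional derivative of a scalar along a vector field (Lie derivative of a function). -/
def dd (X : Vec) (f : Pt → ℝ) (p : Pt) : ℝ := fderiv ℝ f p (X p)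

/-- Coordinate partial derivative `∂_μ`. -/
def pd (μ : Fin 4) (f : Pt → ℝ) (p : Pt) : ℝ := fderiv ℝ f p (Pi.single μ 1)

/-- Lie bracket of vector fields, `[X,Y]^i = X^ν ∂_ν Y^i - Y^ν ∂_ν X^i`. -/
def lb (X Y : Vec) : Vec := fun p i =>
  fderiv ℝ (fun q => Y q i) p (X p) - fderiv ℝ (fun q => X q i) p (Y p)

/-- Coordinate components of the Lie derivative of a metric:
`(£_ξ g)_{μν} = ξ^σ ∂_σ g_{μν} + g_{σν} ∂_μ ξ^σ + g_{μσ} ∂_ν ξ^σ`. -/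
def lieDg (ξ : Vec) (g : Pt → Fin 4 → Fin 4 → ℝ) (p : Pt) (μ ν : Fin 4) : ℝ :=
  (∑ σ : Fin 4, ξ p σ * pd σ (fun q => g q μ ν) p)
  + (∑ σ : Fin 4, g p σ ν * pd μ (fun q => ξ q σ) p)
  + (∑ σ : Fin 4, g p μ σ * pd ν (fun q => ξ q σ) p)

/-- Pointwise value `g(X,Y)` of the metric on two vector fields. -/
def gVal (g : Pt → Fin 4 → Fin 4 → ℝ) (X Y : Vec) (p : Pt) : ℝ :=
  ∑ i : Fin 4, ∑ j : Fin 4, g p i j * X p i * Y p j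

/-- The Kimura metric in coordinates (t,r,θ,φ) = (p 0, p 1, p 2, p 3):
`ds² = (r²/b) dt² - (1/(r²b²)) dr² - r² dθ² - r² sin²θ dφ²`. -/
def kimura (b : ℝ) : Pt → Fin 4 → Fin 4 → ℝ := fun p =>
  ![![p 1 ^ 2 / b, 0, 0, 0],
    ![0, -(1 / (p 1 ^ 2 * b ^ 2)), 0, 0],
    ![0, 0, -(p 1 ^ 2), 0],
    ![0, 0, 0, -(p 1 ^ 2 * Real.sin (p 2) ^ 2)]]

/-! Every component of the Kimura metric is `r ^ 2` or, for `g_rr`, `r ^ (-2)` times a function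
of `θ`, so `r ∂_r g_μν = ±2 g_μν`. Along `ξ = (r² / 2) ∂_r` the transport term is therefore
`±r g_μν`, and the only non-vanishing derivative `∂_r ξ^r = r` adds `2 r g_rr` to the
`rr`-component, which turns its `-r g_rr` into `r g_rr`. -/

section

variable {p : Pt}

@[simp]
theorem pd_const (μ : Fin 4) (c : ℝ) : pd μ (fun _ => c) p = 0 := by
  simp [pd]

theorem pd_comp_apply {u : ℝ → ℝ} {u' : ℝ} {i : Fin 4} (hu : HasDerivAt u u' (p i)) (μ : Fin 4) :
    pd μ (fun q => u (q i)) p = if μ = i then u' else 0 := by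
  have h : HasFDerivAt (fun q : Pt => u (q i)) _ p :=
    hu.comp_hasFDerivAt p (hasFDerivAt_apply (𝕜 := ℝ) i p)
  rw [pd, h.fderiv]
  simp [Pi.single_apply, eq_comm]

theorem pd_comp_apply_mul {u v : ℝ → ℝ} {u' : ℝ} {i j : Fin 4} (hu : HasDerivAt u u' (p i))
    (hv : DifferentiableAt ℝ v (p j)) (hji : j ≠ i) :
    pd i (fun q => u (q i) * v (q j)) p = u' * v (p j) := by
  have h : HasFDerivAt (fun q : Pt => u (q i) * v (q j)) _ p :=
    (hu.comp_hasFDerivAt p (hasFDerivAt_apply (𝕜 := ℝ) i p)).mul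
      (hv.hasDerivAt.comp_hasFDerivAt p (hasFDerivAt_apply (𝕜 := ℝ) j p))
  rw [pd, h.fderiv]
  simp [hji, mul_comm]

theorem lieDg_pi_single {f : ℝ → ℝ} {f' : ℝ} {i : Fin 4} (hf : HasDerivAt f f' (p i))
    (g : Pt → Fin 4 → Fin 4 → ℝ) (μ ν : Fin 4) :
    lieDg (fun q => Pi.single i (f (q i))) g p μ ν =
      f (p i) * pd i (fun q => g q μ ν) p
        + f' * ((if μ = i then g p i ν else 0) + if ν = i then g p μ i else 0) := by
  have hξ : ∀ α σ : Fin 4, pd α (fun q : Pt => Pi.single (M := fun _ => ℝ) i (f (q i)) σ) p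
      = if σ = i then (if α = i then f' else 0) else 0 := by
    intro α σ
    by_cases hσ : σ = i
    · subst hσ
      simp [pd_comp_apply hf]
    · simp [hσ]
  unfold lieDg
  simp only [hξ]
  simp only [Pi.single_apply, mul_ite, mul_zero, ite_mul, zero_mul, Finset.sum_ite_eq',
    Finset.mem_univ, if_true]
  split_ifs <;> ring

theorem kimura_radial_homogeneous (b : ℝ) (hp : p 1 ≠ 0) (μ ν : Fin 4) :
    p 1 * pd 1 (fun q => kimura b q μ ν) p = (if μ = 1 then -2 else 2) * kimura b p μ ν := by
  have htt : pd 1 (fun q => kimura b q 0 0) p = 2 * p 1 / b :=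
    (pd_comp_apply ((hasDerivAt_pow 2 (p 1)).div_const b) 1).trans (by simp)
  have hrr : pd 1 (fun q => kimura b q 1 1) p = 2 / (p 1 ^ 3 * b ^ 2) := by
    have h := (hasDerivAt_zpow (-2) (p 1) (.inl hp)).const_mul (-(b ^ 2)⁻¹)
    convert pd_comp_apply h 1 using 2
    · ext q
      simp [kimura]
    · norm_num [zpow_neg]
      ring
  have hθθ : pd 1 (fun q => kimura b q 2 2) p = -(2 * p 1) :=
    (pd_comp_apply (hasDerivAt_pow 2 (p 1)).neg 1).trans (by simp)
  have hφφ : pd 1 (fun q => kimura b q 3 3) p = -(2 * p 1 * Real.sin (p 2) ^ 2) := by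
    have h := pd_comp_apply_mul (u := fun x => -x ^ 2) (v := fun y => Real.sin y ^ 2)
      (hasDerivAt_pow 2 (p 1)).neg (by fun_prop) (show (2 : Fin 4) ≠ 1 by decide)
    simp only [neg_mul] at h
    exact h.trans (by norm_num)
  fin_cases μ <;> fin_cases ν <;>
    simp only [Fin.zero_eta, Fin.mk_one, Fin.reduceFinMk, htt, hrr, hθθ, hφφ] <;>
    simp [kimura] <;> field_simp

end

theorem kimura_proper_CKV_radial (b : ℝ) :
    ∀ p : Pt, 0 < p 1 → 0 < p 2 → p 2 < Real.pi → ∀ μ ν : Fin 4,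
      lieDg (fun p => ![0, p 1 ^ 2 / 2, 0, 0]) (kimura b) p μ ν
        = p 1 * kimura b p μ ν := by
  intro p hr _ _ μ ν
  have hξ : (fun p : Pt => ![0, p 1 ^ 2 / 2, 0, 0]) = fun q => Pi.single 1 (q 1 ^ 2 / 2) := by
    ext q σ
    fin_cases σ <;> simp
  have hf : HasDerivAt (fun x : ℝ => x ^ 2 / 2) (p 1) (p 1) := by
    simpa using (hasDerivAt_pow 2 (p 1)).div_const 2
  rw [hξ, lieDg_pi_single hf, show p 1 ^ 2 / 2 * pd 1 (fun q => kimura b q μ ν) p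
    = p 1 / 2 * (p 1 * pd 1 (fun q => kimura b q μ ν) p) by ring,
    kimura_radial_homogeneous b hr.ne']
  fin_cases μ <;> fin_cases ν <;> simp [kimura] <;> ring
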